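/- arXiv:1802.05449 — 6 statements merged into one kernel-verified Lean document; each statement's English description precedes it below -/
import Mathlib

section
/- Let U and V be real normed linear spaces, let A : U → V be a bounded linear operator and let u* ∈ U* be a continuous linear functional on U. Then u* lies in the range of the dual-adjoint A^# (that is, there exists v* ∈ V* with u* = v* ∘ A) if and only if there exists a constant C > 0 such that |⟨u*, u⟩| ≤ C‖Au‖ for all u ∈ U. -/
/-- For a bounded linear operator `A : U → V` between real normed spaces
and a continuous linear functional `uStar ∈ U*`, one has `uStar ∈ ran A^#`
(i.e. `uStar = vStar ∘ A` for some `vStar ∈ V*`) if and only if there is a constant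
`C > 0` with `|⟨uStar, u⟩| ≤ C * ‖A u‖` for all `u ∈ U`. -/
theorem range_dual_adjoint_iff_bound
    {U V : Type*} [NormedAddCommGroup U] [NormedSpace ℝ U]
    [NormedAddCommGroup V] [NormedSpace ℝ V]
    (A : U →L[ℝ] V) (uStar : U →L[ℝ] ℝ) :
    (∃ vStar : V →L[ℝ] ℝ, uStar = vStar.comp A) ↔
      ∃ C : ℝ, 0 < C ∧ ∀ u : U, |uStar u| ≤ C * ‖A u‖ := by
  constructor
  · rintro ⟨vStar, rfl⟩
    refine ⟨‖vStar‖ + 1, by positivity, fun u => ?_⟩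
    calc |vStar (A u)| ≤ ‖vStar‖ * ‖A u‖ := vStar.le_opNorm (A u)
      _ ≤ (‖vStar‖ + 1) * ‖A u‖ := by
          have := norm_nonneg (A u); nlinarith
  · rintro ⟨C, hC, hbound⟩
    -- kernel inclusion
    have hker : LinearMap.ker (A : U →ₗ[ℝ] V) ≤ LinearMap.ker (uStar : U →ₗ[ℝ] ℝ) := by
      intro u hu
      simp only [LinearMap.mem_ker] at hu ⊢
      have h := hbound u
      have : A u = 0 := hu
      rw [this] at h
      simp at h
      exact h
    -- factor uStar through the range of A
    set K := LinearMap.ker (A : U →ₗ[ℝ] V)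
    let q : U ⧸ K →ₗ[ℝ] ℝ := K.liftQ (uStar : U →ₗ[ℝ] ℝ) hker
    let e := (A : U →ₗ[ℝ] V).quotKerEquivRange
    let f : LinearMap.range (A : U →ₗ[ℝ] V) →ₗ[ℝ] ℝ := q.comp (e.symm : _ →ₗ[ℝ] _)
    have hf : ∀ u : U, f ⟨A u, LinearMap.mem_range_self _ u⟩ = uStar u := by
      intro u
      have he : e (Submodule.Quotient.mk u) = ⟨A u, LinearMap.mem_range_self _ u⟩ := rfl
      simp only [f, LinearMap.comp_apply, LinearEquiv.coe_coe]
      rw [← he, LinearEquiv.symm_apply_apply]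
      rfl
    have hfbound : ∀ y : LinearMap.range (A : U →ₗ[ℝ] V), ‖f y‖ ≤ C * ‖y‖ := by
      rintro ⟨y, hy⟩
      obtain ⟨u, rfl⟩ := hy
      have := hf u
      rw [show (⟨(A : U →ₗ[ℝ] V) u, _⟩ : LinearMap.range (A : U →ₗ[ℝ] V)) =
            ⟨A u, LinearMap.mem_range_self _ u⟩ from rfl, hf u]
      simpa [Real.norm_eq_abs] using hbound u
    let fc : LinearMap.range (A : U →ₗ[ℝ] V) →L[ℝ] ℝ := f.mkContinuous C hfbound
    obtain ⟨g, hg, -⟩ := exists_extension_norm_eq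
      (LinearMap.range (A : U →ₗ[ℝ] V)) fc
    refine ⟨g, ?_⟩
    ext u
    have := hg ⟨A u, LinearMap.mem_range_self _ u⟩
    simp only [ContinuousLinearMap.comp_apply]
    rw [show g (A u) = fc ⟨A u, LinearMap.mem_range_self _ u⟩ from this]
    exact (hf u).symm
end

section
/- Let U and V be real normed linear spaces, let A : U → V be a bounded linear operator, let u* ∈ U* and let C > 0. If the one-sided bound ⟨u*, u⟩ ≤ C‖Au‖ holds for all u ∈ U, then u* lies in the range of the dual-adjoint A^#, i.e., there exists v* ∈ V* with u* = v* ∘ A. -/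
/-- If `A : U → V` is a bounded linear operator between real normed spaces,
`uStar ∈ U*`, `C > 0`, and the one-sided bound `⟨uStar, u⟩ ≤ C * ‖A u‖` holds for all `u ∈ U`,
then `uStar` lies in the range of the dual-adjoint `A^#`, i.e. `uStar = vStar ∘ A`
for some `vStar ∈ V*`. -/
theorem mem_range_dual_adjoint_of_one_sided_bound
    {U V : Type*} [NormedAddCommGroup U] [NormedSpace ℝ U]
    [NormedAddCommGroup V] [NormedSpace ℝ V]
    (A : U →L[ℝ] V) (uStar : U →L[ℝ] ℝ)
    (C : ℝ) (hC : 0 < C) (h : ∀ u : U, uStar u ≤ C * ‖A u‖) :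
    ∃ vStar : V →L[ℝ] ℝ, uStar = vStar.comp A := by
  -- two-sided bound
  have habs : ∀ u : U, |uStar u| ≤ C * ‖A u‖ := by
    intro u
    rw [abs_le]
    refine ⟨?_, h u⟩
    have := h (-u)
    simp only [map_neg, norm_neg] at this
    linarith
  -- uStar is constant on fibers of A
  have hfib : ∀ u u' : U, A u = A u' → uStar u = uStar u' := by
    intro u u' huu
    have : |uStar (u - u')| ≤ C * ‖A (u - u')‖ := habs _
    simp only [map_sub, huu, sub_self, norm_zero, mul_zero] at this
    have := abs_nonpos_iff.mp (le_of_le_of_eq this rfl)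
    linarith [sub_eq_zero.mp (by linarith [abs_nonneg (uStar u - uStar u')] : uStar u - uStar u' = 0)]
  set S : Subspace ℝ V := LinearMap.range (A : U →ₗ[ℝ] V) with hS
  -- linear functional on S
  have hmem : ∀ s : S, ∃ u : U, A u = (s : V) := fun s => s.2
  let pre : S → U := fun s => (hmem s).choose
  have hpre : ∀ s : S, A (pre s) = (s : V) := fun s => (hmem s).choose_spec
  let f₀ : S →ₗ[ℝ] ℝ :=
    { toFun := fun s => uStar (pre s)
      map_add' := by
        intro s t
        show uStar (pre (s + t)) = uStar (pre s) + uStar (pre t)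
        rw [← map_add uStar]
        apply hfib
        simp [hpre, map_add]
      map_smul' := by
        intro c s
        show uStar (pre (c • s)) = c • uStar (pre s)
        rw [← map_smul uStar]
        apply hfib
        simp [hpre, map_smul] }
  have hf₀ : ∀ s : S, ‖f₀ s‖ ≤ C * ‖(s : V)‖ := by
    intro s
    have := habs (pre s)
    rw [hpre s] at this
    simpa [f₀, Real.norm_eq_abs] using this
  let f : S →L[ℝ] ℝ := f₀.mkContinuous C hf₀
  obtain ⟨g, hg, -⟩ := exists_extension_norm_eq S f
  refine ⟨g, ?_⟩
  ext u
  have : g (A u) = f ⟨A u, ⟨u, rfl⟩⟩ := hg ⟨A u, ⟨u, rfl⟩⟩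
  simp only [ContinuousLinearMap.comp_apply]
  rw [this]
  exact (hfib _ _ (hpre ⟨A u, ⟨u, rfl⟩⟩)).symm
end

section
/- Let Ω ⊂ ℝⁿ be an open set equipped with Lebesgue measure, let m ≥ 1, p ∈ [1, ∞), and let p* denote the conjugate exponent of p (1/p + 1/p* = 1). Let f : Ω × ℝ^m → [0, ∞) be a Carathéodory function (measurable in x, continuous in y) such that for almost every x ∈ Ω the map y ↦ f(x, y) is differentiable with gradient f'_y, and suppose there exist a ∈ L^{p*}(Ω) and b ≥ 0 such that |f'_y(x, y)| ≤ a(x) + b|y|^{p−1} for almost every x and all y. Define G : L^p(Ω, ℝ^m) → [0, ∞] by G(g) = ∫_Ω f(x, g(x)) dx. Then G is Gâteaux differentiable at every g belonging to the interior (with respect to the L^p norm) of the effective domain {g : G(g) < ∞}, and its Gâteaux derivative is the continuous linear functional h ↦ ∫_Ω f'_y(x, g(x)) · h(x) dx on L^p(Ω, ℝ^m). -/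
open MeasureTheory Filter Topology
open scoped ENNReal NNReal

/-- Carathéodory composition: if `f` is measurable in `x` and a.e. continuous in `y`,
then `x ↦ f x (u x)` is a.e. strongly measurable for any a.e. strongly measurable `u`. -/
lemma caratheodory_comp {α E : Type*} [MeasurableSpace α] [MeasurableSpace E]
    [TopologicalSpace E] {μ : Measure α}
    (f : α → E → ℝ) (hf_meas : ∀ y, Measurable fun x => f x y)
    (hf_cont : ∀ᵐ x ∂μ, Continuous fun y => f x y)
    {u : α → E} (hu : AEStronglyMeasurable u μ) :
    AEStronglyMeasurable (fun x => f x (u x)) μ := by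
  obtain ⟨v, hv, huv⟩ := hu
  have hsk : ∀ s : SimpleFunc α E, Measurable fun x => f x (s x) := by
    intro s
    classical
    have heq : (fun x => f x (s x))
        = fun x => ∑ y ∈ s.range, if s x = y then f x y else 0 := by
      funext x
      rw [Finset.sum_ite_eq s.range (s x) (fun y => f x y)]
      simp [s.mem_range_self x]
    rw [heq]
    refine Finset.measurable_sum _ fun y _ => ?_
    exact Measurable.ite (s.measurableSet_fiber y) (hf_meas y) measurable_const
  have hlim : ∀ᵐ x ∂μ, Tendsto (fun k => f x (hv.approx k x)) atTop (𝓝 (f x (v x))) := by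
    filter_upwards [hf_cont] with x hx
    exact (hx.tendsto (v x)).comp (hv.tendsto_approx x)
  have h1 : AEStronglyMeasurable (fun x => f x (v x)) μ :=
    aestronglyMeasurable_of_tendsto_ae atTop
      (fun k => ((hsk (hv.approx k)).aestronglyMeasurable)) hlim
  exact h1.congr (huv.mono fun x hx => by simp only [hx])

set_option maxHeartbeats 1000000 in
/-- Let `Ω ⊂ ℝⁿ` be open with Lebesgue measure, `m ≥ 1`, `p ∈ [1, ∞)` with
conjugate exponent `q` (`1/p + 1/q = 1`).  Let `f : Ω × ℝ^m → [0, ∞)` be a Carathéodory function,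
differentiable in `y` for a.e. `x` with gradient `f'`, satisfying
`|f'(x, y)| ≤ a(x) + b |y|^(p-1)` with `a ∈ L^q(Ω)`, `b ≥ 0`.  Then the functional
`G(g) = ∫_Ω f(x, g(x)) dx` on `L^p(Ω, ℝ^m)` is Gâteaux differentiable at every `g` in the
interior of its effective domain, with Gâteaux derivative the continuous linear functional
`h ↦ ∫_Ω f'(x, g(x)) · h(x) dx`. -/
theorem gateaux_differentiable_integral_functional_Lp
    {n m : ℕ} (hm : 1 ≤ m)
    (Ω : Set (EuclideanSpace ℝ (Fin n))) (hΩ : IsOpen Ω)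
    (p q : ℝ≥0∞) [Fact (1 ≤ p)] (hp : 1 ≤ p) (hp' : p ≠ ⊤) (hpq : p⁻¹ + q⁻¹ = 1)
    (f : EuclideanSpace ℝ (Fin n) → EuclideanSpace ℝ (Fin m) → ℝ)
    (f' : EuclideanSpace ℝ (Fin n) → EuclideanSpace ℝ (Fin m) → EuclideanSpace ℝ (Fin m))
    (hf_meas : ∀ y, Measurable fun x => f x y)
    (hf_nonneg : ∀ᵐ x ∂(volume.restrict Ω), ∀ y, 0 ≤ f x y)
    (hf_cont : ∀ᵐ x ∂(volume.restrict Ω), Continuous fun y => f x y)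
    (hf_diff : ∀ᵐ x ∂(volume.restrict Ω), ∀ y, HasGradientAt (f x) (f' x y) y)
    (a : EuclideanSpace ℝ (Fin n) → ℝ) (ha : MemLp a q (volume.restrict Ω))
    (b : ℝ) (hb : 0 ≤ b)
    (hgrowth : ∀ᵐ x ∂(volume.restrict Ω), ∀ y,
      ‖f' x y‖ ≤ a x + b * ‖y‖ ^ (p.toReal - 1))
    (G : Lp (EuclideanSpace ℝ (Fin m)) p (volume.restrict Ω) → ℝ≥0∞)
    (hG : ∀ g, G g = ∫⁻ x, ENNReal.ofReal (f x (g x)) ∂(volume.restrict Ω))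
    (g : Lp (EuclideanSpace ℝ (Fin m)) p (volume.restrict Ω))
    (hg : g ∈ interior {g | G g ≠ ⊤}) :
    ∃ L : Lp (EuclideanSpace ℝ (Fin m)) p (volume.restrict Ω) →L[ℝ] ℝ,
      (∀ h, L h = ∫ x, (inner ℝ (f' x (g x)) (h x) : ℝ) ∂(volume.restrict Ω)) ∧
      (∀ h, Tendsto (fun t : ℝ => ((G (g + t • h)).toReal - (G g).toReal) / t)
        (𝓝[>] 0) (𝓝 (L h))) := by
  classical
  have hp0 : p ≠ 0 := (zero_lt_one.trans_le hp).ne'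
  have hpt1 : (1:ℝ) ≤ p.toReal := by
    rw [← ENNReal.toReal_one]
    exact ENNReal.toReal_mono hp' hp
  have hrt : (0:ℝ) ≤ p.toReal - 1 := by linarith
  have hpinv_ne_top : p⁻¹ ≠ ⊤ := by
    simp [ENNReal.inv_ne_top, hp0]
  -- the conjugate exponent identity
  have hq_eq : p / ENNReal.ofReal (p.toReal - 1) = q := by
    have hofr : ENNReal.ofReal (p.toReal - 1) = p - 1 := by
      rw [ENNReal.ofReal_sub _ zero_le_one, ENNReal.ofReal_toReal hp', ENNReal.ofReal_one]
    rw [hofr]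
    have hqinv : 1 - p⁻¹ = q⁻¹ := by
      refine ENNReal.sub_eq_of_eq_add hpinv_ne_top ?_
      rw [add_comm]
      exact hpq.symm
    refine inv_inj.mp ?_
    rw [← hqinv, ENNReal.inv_div (Or.inl (by simp [hp'])) (Or.inr hp0)]
    rw [ENNReal.sub_div (fun _ _ => hp0), ENNReal.div_self hp0 hp', one_div]
  have h1pq : (1:ℝ≥0∞) / 1 = 1 / q + 1 / p := by
    rw [one_div, one_div, one_div, inv_one, add_comm]
    exact hpq.symm
  -- integrability and integral formula on the effective domain
  have hInt : ∀ u : Lp (EuclideanSpace ℝ (Fin m)) p (volume.restrict Ω), G u ≠ ⊤ →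
      Integrable (fun x => f x (u x)) (volume.restrict Ω) ∧ (G u).toReal = ∫ x, f x (u x) ∂(volume.restrict Ω) := by
    intro u hu
    have hm' := caratheodory_comp f hf_meas hf_cont (Lp.aestronglyMeasurable u)
    have hnn : 0 ≤ᵐ[(volume.restrict Ω)] fun x => f x (u x) := hf_nonneg.mono fun x hx => hx _
    have heq : ∫⁻ x, ‖f x (u x)‖ₑ ∂(volume.restrict Ω) = G u := by
      rw [hG]
      exact lintegral_congr_ae (hnn.mono fun x hx => Real.enorm_eq_ofReal hx)
    have hint : Integrable (fun x => f x (u x)) (volume.restrict Ω) := by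
      refine ⟨hm', ?_⟩
      show (∫⁻ x, ‖f x (u x)‖ₑ ∂(volume.restrict Ω)) < ⊤
      rw [heq]
      exact lt_of_le_of_ne le_top hu
    refine ⟨hint, ?_⟩
    rw [integral_eq_lintegral_of_nonneg_ae hnn hm', hG]
  -- pointwise directional derivative
  have key : ∀ x : EuclideanSpace ℝ (Fin n), (∀ y, HasGradientAt (f x) (f' x y) y) →
      ∀ (y w : EuclideanSpace ℝ (Fin m)),
      Tendsto (fun t : ℝ => (f x (y + t • w) - f x y) / t) (𝓝[≠] (0:ℝ))
        (𝓝 (inner ℝ (f' x y) w : ℝ)) := by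
    intro x hx y w
    have hc : HasDerivAt (fun t : ℝ => y + t • w) w 0 := by
      simpa using ((hasDerivAt_id (0:ℝ)).smul_const w).const_add y
    have hfd : HasFDerivAt (f x) ((InnerProductSpace.toDual ℝ _) (f' x y))
        ((fun t : ℝ => y + t • w) 0) := by
      simpa using (hx y).hasFDerivAt
    have hd : HasDerivAt (fun t : ℝ => f x (y + t • w)) (inner ℝ (f' x y) w : ℝ) 0 := by
      have h2 := hfd.comp_hasDerivAt 0 hc
      rw [InnerProductSpace.toDual_apply_apply] at h2
      exact h2
    have h3 := hasDerivAt_iff_tendsto_slope_zero.mp hd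
    refine h3.congr fun t => ?_
    simp [smul_eq_mul, div_eq_inv_mul]
  -- sequence tending to 0 from the right
  have seq_lim : Tendsto (fun k : ℕ => ((k:ℝ)+1)⁻¹) atTop (𝓝[≠] (0:ℝ)) := by
    apply tendsto_nhdsWithin_of_tendsto_nhds_of_eventually_within
    · simpa only [one_div] using tendsto_one_div_add_atTop_nhds_zero_nat (𝕜 := ℝ)
    · exact Eventually.of_forall fun k => (by positivity : (0:ℝ) < ((k:ℝ)+1)⁻¹).ne'
  -- measurability of the pairing
  have pair_meas : ∀ h : Lp (EuclideanSpace ℝ (Fin m)) p (volume.restrict Ω),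
      AEStronglyMeasurable (fun x => (inner ℝ (f' x (g x)) (h x) : ℝ)) (volume.restrict Ω) := by
    intro h
    have hcomp : ∀ c : ℝ, AEStronglyMeasurable (fun x => f x (g x + c • h x)) (volume.restrict Ω) := by
      intro c
      exact caratheodory_comp f hf_meas hf_cont
        ((Lp.aestronglyMeasurable g).add ((Lp.aestronglyMeasurable h).const_smul c))
    have hg0 := caratheodory_comp f hf_meas hf_cont (Lp.aestronglyMeasurable g)
    have hk : ∀ k : ℕ, AEStronglyMeasurable
        (fun x => (f x (g x + ((k:ℝ)+1)⁻¹ • h x) - f x (g x)) / ((k:ℝ)+1)⁻¹) (volume.restrict Ω) := by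
      intro k
      have hsub := (hcomp (((k:ℝ)+1)⁻¹)).sub hg0
      refine (hsub.mul_const ((k:ℝ)+1)).congr ?_
      exact Eventually.of_forall fun x => by
        simp [div_inv_eq_mul]
    refine aestronglyMeasurable_of_tendsto_ae atTop hk ?_
    filter_upwards [hf_diff] with x hx
    exact (key x hx (g x) (h x)).comp seq_lim
  -- the dominating L^q functions
  have hmemq : ∀ h : Lp (EuclideanSpace ℝ (Fin m)) p (volume.restrict Ω),
      MemLp (fun x => ‖a x‖ + b * (‖g x‖ + ‖h x‖) ^ (p.toReal - 1)) q (volume.restrict Ω) := by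
    intro h
    have hsum : MemLp (fun x => ‖g x‖ + ‖h x‖) p (volume.restrict Ω) :=
      (Lp.memLp g).norm.add (Lp.memLp h).norm
    have h1 := hsum.norm_rpow_div (ENNReal.ofReal (p.toReal - 1))
    rw [ENNReal.toReal_ofReal hrt, hq_eq] at h1
    have h2 : MemLp (fun x => (‖g x‖ + ‖h x‖) ^ (p.toReal - 1)) q (volume.restrict Ω) := by
      have heq : (fun x => ‖(‖g x‖ + ‖h x‖)‖ ^ (p.toReal - 1))
          = fun x => (‖g x‖ + ‖h x‖) ^ (p.toReal - 1) :=
        funext fun x => by rw [Real.norm_of_nonneg (by positivity)]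
      rwa [heq] at h1
    exact ha.norm.add (h2.const_mul b)
  have hA : MemLp (fun x => ‖a x‖ + b * ‖g x‖ ^ (p.toReal - 1)) q (volume.restrict Ω) := by
    have h1 := (Lp.memLp g).norm_rpow_div (ENNReal.ofReal (p.toReal - 1))
    rw [ENNReal.toReal_ofReal hrt, hq_eq] at h1
    exact ha.norm.add (h1.const_mul b)
  -- Hölder: products are integrable
  have hIntProd : ∀ (A : EuclideanSpace ℝ (Fin n) → ℝ), MemLp A q (volume.restrict Ω) →
      ∀ h : Lp (EuclideanSpace ℝ (Fin m)) p (volume.restrict Ω), Integrable (fun x => A x * ‖h x‖) (volume.restrict Ω) := by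
    intro A hAq h
    have h1 : MemLp (A • fun x => ‖h x‖) 1 (volume.restrict Ω) := (Lp.memLp h).norm.smul hAq (hpqr := ⟨by rw [inv_one, add_comm]; exact hpq⟩)
    have h2 : (A • fun x => ‖h x‖) = fun x => A x * ‖h x‖ := rfl
    rw [h2] at h1
    exact memLp_one_iff_integrable.mp h1
  -- Hölder: norm bound for nonnegative A
  have hHolder : ∀ (A : EuclideanSpace ℝ (Fin n) → ℝ), MemLp A q (volume.restrict Ω) → (∀ x, 0 ≤ A x) →
      ∀ h : Lp (EuclideanSpace ℝ (Fin m)) p (volume.restrict Ω),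
      ∫ x, A x * ‖h x‖ ∂(volume.restrict Ω) ≤ (eLpNorm A q (volume.restrict Ω)).toReal * ‖h‖ := by
    intro A hAq hA0 h
    have hnnA : 0 ≤ᵐ[(volume.restrict Ω)] fun x => A x * ‖h x‖ :=
      Eventually.of_forall fun x => mul_nonneg (hA0 x) (norm_nonneg _)
    have hm' : AEStronglyMeasurable (fun x => A x * ‖h x‖) (volume.restrict Ω) :=
      hAq.aestronglyMeasurable.mul (Lp.aestronglyMeasurable h).norm
    rw [integral_eq_lintegral_of_nonneg_ae hnnA hm', Lp.norm_def, ← ENNReal.toReal_mul]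
    apply ENNReal.toReal_mono (ENNReal.mul_ne_top hAq.eLpNorm_ne_top (Lp.memLp h).eLpNorm_ne_top)
    have heq1 : ∫⁻ x, ENNReal.ofReal (A x * ‖h x‖) ∂(volume.restrict Ω) = eLpNorm (A • fun x => ‖h x‖) 1 (volume.restrict Ω) := by
      rw [eLpNorm_one_eq_lintegral_enorm]
      refine lintegral_congr fun x => ?_
      rw [Pi.smul_apply', smul_eq_mul, Real.enorm_eq_ofReal (mul_nonneg (hA0 x) (norm_nonneg _))]
    rw [heq1]
    calc eLpNorm (A • fun x => ‖h x‖) 1 (volume.restrict Ω)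
        ≤ eLpNorm A q (volume.restrict Ω) * eLpNorm (fun x => ‖h x‖) p (volume.restrict Ω) :=
          eLpNorm_smul_le_mul_eLpNorm (Lp.aestronglyMeasurable h).norm
            hAq.aestronglyMeasurable (hpqr := ⟨by rw [inv_one, add_comm]; exact hpq⟩)
      _ = eLpNorm A q (volume.restrict Ω) * eLpNorm (⇑h) p (volume.restrict Ω) := by rw [eLpNorm_norm]
  -- pointwise bound for the pairing
  have pair_bound : ∀ h : Lp (EuclideanSpace ℝ (Fin m)) p (volume.restrict Ω), ∀ᵐ x ∂(volume.restrict Ω),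
      ‖(inner ℝ (f' x (g x)) (h x) : ℝ)‖
        ≤ (‖a x‖ + b * ‖g x‖ ^ (p.toReal - 1)) * ‖h x‖ := by
    intro h
    filter_upwards [hgrowth] with x hx
    calc ‖(inner ℝ (f' x (g x)) (h x) : ℝ)‖ ≤ ‖f' x (g x)‖ * ‖h x‖ := norm_inner_le_norm _ _
      _ ≤ (‖a x‖ + b * ‖g x‖ ^ (p.toReal - 1)) * ‖h x‖ := by
          apply mul_le_mul_of_nonneg_right _ (norm_nonneg _)
          refine (hx (g x)).trans ?_
          have := le_abs_self (a x)
          rw [Real.norm_eq_abs]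
          linarith
  have pair_int : ∀ h : Lp (EuclideanSpace ℝ (Fin m)) p (volume.restrict Ω),
      Integrable (fun x => (inner ℝ (f' x (g x)) (h x) : ℝ)) (volume.restrict Ω) := by
    intro h
    exact (hIntProd _ hA h).mono' (pair_meas h) (pair_bound h)
  -- the linear functional
  set Φ : Lp (EuclideanSpace ℝ (Fin m)) p (volume.restrict Ω) →ₗ[ℝ] ℝ :=
    { toFun := fun h => ∫ x, (inner ℝ (f' x (g x)) (h x) : ℝ) ∂(volume.restrict Ω)
      map_add' := by
        intro h1 h2
        show (∫ x, (inner ℝ (f' x (g x)) ((h1 + h2) x) : ℝ) ∂(volume.restrict Ω))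
            = (∫ x, (inner ℝ (f' x (g x)) (h1 x) : ℝ) ∂(volume.restrict Ω))
              + ∫ x, (inner ℝ (f' x (g x)) (h2 x) : ℝ) ∂(volume.restrict Ω)
        have e1 : (fun x => (inner ℝ (f' x (g x)) ((h1 + h2) x) : ℝ))
            =ᵐ[(volume.restrict Ω)] fun x => (inner ℝ (f' x (g x)) (h1 x) : ℝ) + (inner ℝ (f' x (g x)) (h2 x) : ℝ) := by
          filter_upwards [Lp.coeFn_add h1 h2] with x hx
          simp only [hx, Pi.add_apply, inner_add_right]
        rw [integral_congr_ae e1, integral_add (pair_int h1) (pair_int h2)]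
      map_smul' := by
        intro c h
        show (∫ x, (inner ℝ (f' x (g x)) ((c • h) x) : ℝ) ∂(volume.restrict Ω))
            = (RingHom.id ℝ) c • ∫ x, (inner ℝ (f' x (g x)) (h x) : ℝ) ∂(volume.restrict Ω)
        have e1 : (fun x => (inner ℝ (f' x (g x)) ((c • h) x) : ℝ))
            =ᵐ[(volume.restrict Ω)] fun x => c * (inner ℝ (f' x (g x)) (h x) : ℝ) := by
          filter_upwards [Lp.coeFn_smul c h] with x hx
          simp only [hx, Pi.smul_apply, real_inner_smul_right, smul_eq_mul]
        rw [integral_congr_ae e1, integral_const_mul]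
        simp } with hΦdef
  have hbd : ∀ h : Lp (EuclideanSpace ℝ (Fin m)) p (volume.restrict Ω),
      ‖Φ h‖ ≤ (eLpNorm (fun x => ‖a x‖ + b * ‖g x‖ ^ (p.toReal - 1)) q (volume.restrict Ω)).toReal * ‖h‖ := by
    intro h
    have h1 : ‖Φ h‖ ≤ ∫ x, ‖(inner ℝ (f' x (g x)) (h x) : ℝ)‖ ∂(volume.restrict Ω) :=
      norm_integral_le_integral_norm _
    refine h1.trans ?_
    have h2 : ∫ x, ‖(inner ℝ (f' x (g x)) (h x) : ℝ)‖ ∂(volume.restrict Ω)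
        ≤ ∫ x, (‖a x‖ + b * ‖g x‖ ^ (p.toReal - 1)) * ‖h x‖ ∂(volume.restrict Ω) :=
      integral_mono_ae (pair_int h).norm (hIntProd _ hA h) (pair_bound h)
    refine h2.trans ?_
    exact hHolder _ hA (fun x => by positivity) h
  refine ⟨LinearMap.mkContinuous Φ _ hbd, fun h => rfl, ?_⟩
  intro h
  -- finiteness near g
  obtain ⟨ε, hε, hball⟩ := Metric.mem_nhds_iff.mp (mem_interior_iff_mem_nhds.mp hg)
  have hgfin : G g ≠ ⊤ := interior_subset hg
  set δ : ℝ := min (ε / (‖h‖ + 1)) 1 with hδdef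
  have hδpos : 0 < δ := lt_min (by positivity) one_pos
  have hmem : ∀ t ∈ Set.Ioo (0:ℝ) δ, G (g + t • h) ≠ ⊤ := by
    intro t ht
    apply hball
    rw [Metric.mem_ball, dist_eq_norm, add_sub_cancel_left, norm_smul,
      Real.norm_of_nonneg ht.1.le]
    have h2 : (0:ℝ) < ‖h‖ + 1 := by positivity
    have h1 : t < ε / (‖h‖ + 1) := lt_of_lt_of_le ht.2 (min_le_left _ _)
    calc t * ‖h‖ ≤ t * (‖h‖ + 1) := by
          apply mul_le_mul_of_nonneg_left (by linarith) ht.1.le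
      _ < (ε / (‖h‖ + 1)) * (‖h‖ + 1) := by exact mul_lt_mul_of_pos_right h1 h2
      _ = ε := div_mul_cancel₀ _ h2.ne'
  -- eventual identification of the difference quotient with an integral
  have hev : ∀ᶠ t in 𝓝[>] (0:ℝ),
      ∫ x, (f x (g x + t • h x) - f x (g x)) / t ∂(volume.restrict Ω)
        = ((G (g + t • h)).toReal - (G g).toReal) / t := by
    filter_upwards [Ioo_mem_nhdsGT_of_mem (Set.mem_Ico.mpr ⟨le_refl (0:ℝ), hδpos⟩)] with t ht
    have hfin := hmem t ht
    have h1 := hInt (g + t • h) hfin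
    have h2 := hInt g hgfin
    have hcoe : (fun x => f x ((g + t • h) x)) =ᵐ[(volume.restrict Ω)] fun x => f x (g x + t • h x) := by
      filter_upwards [Lp.coeFn_add g (t • h), Lp.coeFn_smul t h] with x hx1 hx2
      simp only [hx1, Pi.add_apply, hx2, Pi.smul_apply]
    rw [h1.2, h2.2, integral_congr_ae hcoe, ← integral_sub (h1.1.congr hcoe) h2.1,
      integral_div]
  -- dominated convergence
  have hbound_int : Integrable
      (fun x => (‖a x‖ + b * (‖g x‖ + ‖h x‖) ^ (p.toReal - 1)) * ‖h x‖) (volume.restrict Ω) :=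
    hIntProd _ (hmemq h) h
  have hmain : Tendsto (fun t : ℝ => ∫ x, (f x (g x + t • h x) - f x (g x)) / t ∂(volume.restrict Ω))
      (𝓝[>] (0:ℝ)) (𝓝 (∫ x, (inner ℝ (f' x (g x)) (h x) : ℝ) ∂(volume.restrict Ω))) := by
    refine tendsto_integral_filter_of_dominated_convergence _ ?_ ?_ hbound_int ?_
    · refine Eventually.of_forall fun t => ?_
      have hc1 := caratheodory_comp f hf_meas hf_cont
        ((Lp.aestronglyMeasurable g).add ((Lp.aestronglyMeasurable h).const_smul t))
      have hc2 := caratheodory_comp f hf_meas hf_cont (Lp.aestronglyMeasurable g)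
      refine ((hc1.sub hc2).mul_const t⁻¹).congr ?_
      exact Eventually.of_forall fun x => by simp [div_eq_mul_inv]
    · filter_upwards [Ioc_mem_nhdsGT_of_mem (Set.mem_Ico.mpr ⟨le_refl (0:ℝ), one_pos⟩)] with t ht
      filter_upwards [hf_diff, hgrowth] with x hxd hxg
      have hy1 : g x ∈ Metric.closedBall (0 : EuclideanSpace ℝ (Fin m)) (‖g x‖ + ‖h x‖) := by
        rw [Metric.mem_closedBall, dist_zero_right]
        linarith [norm_nonneg (h x)]
      have hy2 : g x + t • h x ∈ Metric.closedBall (0 : EuclideanSpace ℝ (Fin m))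
          (‖g x‖ + ‖h x‖) := by
        rw [Metric.mem_closedBall, dist_zero_right]
        calc ‖g x + t • h x‖ ≤ ‖g x‖ + ‖t • h x‖ := norm_add_le _ _
          _ ≤ ‖g x‖ + ‖h x‖ := by
              rw [norm_smul, Real.norm_of_nonneg ht.1.le]
              have := mul_le_of_le_one_left (norm_nonneg (h x)) ht.2
              linarith
      have hC : ∀ z ∈ Metric.closedBall (0 : EuclideanSpace ℝ (Fin m)) (‖g x‖ + ‖h x‖),
          ‖(InnerProductSpace.toDual ℝ _) (f' x z)‖
            ≤ ‖a x‖ + b * (‖g x‖ + ‖h x‖) ^ (p.toReal - 1) := by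
        intro z hz
        rw [LinearIsometryEquiv.norm_map]
        refine (hxg z).trans ?_
        have h1 : ‖z‖ ≤ ‖g x‖ + ‖h x‖ := by
          rwa [Metric.mem_closedBall, dist_zero_right] at hz
        have h2 : ‖z‖ ^ (p.toReal - 1) ≤ (‖g x‖ + ‖h x‖) ^ (p.toReal - 1) :=
          Real.rpow_le_rpow (norm_nonneg _) h1 hrt
        have h3 := le_abs_self (a x)
        rw [Real.norm_eq_abs]
        nlinarith
      have hmv := Convex.norm_image_sub_le_of_norm_hasFDerivWithin_le
        (fun z _ => ((hxd z).hasFDerivAt).hasFDerivWithinAt) hC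
        (convex_closedBall _ _) hy1 hy2
      rw [add_sub_cancel_left, norm_smul, Real.norm_of_nonneg ht.1.le] at hmv
      rw [norm_div, Real.norm_of_nonneg ht.1.le, div_le_iff₀ ht.1]
      calc ‖f x (g x + t • h x) - f x (g x)‖
          ≤ (‖a x‖ + b * (‖g x‖ + ‖h x‖) ^ (p.toReal - 1)) * (t * ‖h x‖) := hmv
        _ = (‖a x‖ + b * (‖g x‖ + ‖h x‖) ^ (p.toReal - 1)) * ‖h x‖ * t := by ring
    · filter_upwards [hf_diff] with x hx
      exact (key x hx (g x) (h x)).mono_left (nhdsWithin_mono 0 fun t ht => ne_of_gt ht)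
  exact Tendsto.congr' hev hmain
end

section
/- Let Ω ⊂ ℝⁿ be an open set with Lebesgue measure, N, n ≥ 1, 1 ≤ s ≤ min(N, n), p ∈ [s, ∞), and let q be the conjugate exponent of p/s (with q = ∞ when p = s). Let v ∈ L^q(Ω), let M, H ∈ L^p(Ω, ℝ^{N×n}), and fix injective maps α : {1,…,s} → {1,…,N} and β : {1,…,s} → {1,…,n}; write A_{αβ} for the s×s submatrix of A ∈ ℝ^{N×n} with rows α and columns β. Then the function φ(t) = ∫_Ω v(x) · det((M(x) + t H(x))_{αβ}) dx is well defined for all t ∈ ℝ and is differentiable at t = 0 with φ'(0) = ∫_Ω v(x) · trace( adjugate((M(x))_{αβ}) · (H(x))_{αβ} ) dx. -/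
open MeasureTheory
open scoped ENNReal NNReal

attribute [local instance] Matrix.normedAddCommGroup Matrix.normedSpace

namespace MinorPerturbAux

variable {s : ℕ}

/-- Row-wise bound on the determinant. -/
lemma abs_det_le_prod (C : Matrix (Fin s) (Fin s) ℝ) (a : Fin s → ℝ)
    (ha : ∀ i, 0 ≤ a i) (h : ∀ i j, |C i j| ≤ a i) :
    |C.det| ≤ (Nat.factorial s : ℝ) * ∏ i, a i := by
  classical
  have abv : AbsoluteValue ℝ ℝ := .abs
  calc |C.det| = |∑ σ : Equiv.Perm (Fin s), Equiv.Perm.sign σ • ∏ i, C (σ i) i| := by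
        rw [Matrix.det_apply]
    _ ≤ ∑ σ : Equiv.Perm (Fin s), |Equiv.Perm.sign σ • ∏ i, C (σ i) i| :=
        Finset.abs_sum_le_sum_abs _ _
    _ = ∑ σ : Equiv.Perm (Fin s), ∏ i, |C (σ i) i| := Finset.sum_congr rfl fun σ _ => by
        rcases Int.units_eq_one_or (Equiv.Perm.sign σ) with hσ | hσ <;>
          simp [hσ, Finset.abs_prod]
    _ ≤ ∑ _σ : Equiv.Perm (Fin s), ∏ i, a i := Finset.sum_le_sum fun σ _ => by
        calc ∏ i, |C (σ i) i| ≤ ∏ i, a (σ i) :=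
              Finset.prod_le_prod (fun _ _ => abs_nonneg _) (fun i _ => h (σ i) i)
          _ = ∏ i, a i := Equiv.prod_comp σ a
    _ = (Nat.factorial s : ℝ) * ∏ i, a i := by
        rw [Finset.sum_const, Finset.card_univ, Fintype.card_perm, Fintype.card_fin,
          nsmul_eq_mul]

lemma abs_det_le (C : Matrix (Fin s) (Fin s) ℝ) :
    |C.det| ≤ (Nat.factorial s : ℝ) * ‖C‖ ^ s := by
  have h := abs_det_le_prod C (fun _ => ‖C‖) (fun _ => norm_nonneg _)
    (fun i j => by
      simpa [Real.norm_eq_abs] using Matrix.norm_entry_le_entrywise_sup_norm C (i := i) (j := j))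
  simpa [Finset.prod_const, Finset.card_univ] using h

lemma det_updateRow_le (C : Matrix (Fin s) (Fin s) ℝ) (i : Fin s) (r : Fin s → ℝ) :
    |(C.updateRow i r).det| ≤ (Nat.factorial s : ℝ) * (‖C‖ ^ (s - 1) * ‖r‖) := by
  classical
  have h := abs_det_le_prod (C.updateRow i r) (fun k => if k = i then ‖r‖ else ‖C‖)
    (fun k => by by_cases hk : k = i <;> simp [hk, norm_nonneg])
    (fun k j => by
      show |(C.updateRow i r) k j| ≤ if k = i then ‖r‖ else ‖C‖
      by_cases hk : k = i
      · subst hk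
        simpa [Matrix.updateRow_self, Real.norm_eq_abs] using norm_le_pi_norm r j
      · rw [Matrix.updateRow_ne hk, if_neg hk]
        simpa [Real.norm_eq_abs]
          using Matrix.norm_entry_le_entrywise_sup_norm C (i := k) (j := j))
  have hprod : (∏ k : Fin s, (if k = i then ‖r‖ else ‖C‖)) = ‖r‖ * ‖C‖ ^ (s - 1) := by
    rw [← Finset.mul_prod_erase Finset.univ _ (Finset.mem_univ i)]
    rw [if_pos rfl]
    congr 1
    rw [Finset.prod_congr rfl (fun k hk => if_neg (Finset.ne_of_mem_erase hk)),
      Finset.prod_const, Finset.card_erase_of_mem (Finset.mem_univ i), Finset.card_univ,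
      Fintype.card_fin]
  rw [hprod] at h
  calc |(C.updateRow i r).det| ≤ (Nat.factorial s : ℝ) * (‖r‖ * ‖C‖ ^ (s - 1)) := h
    _ = (Nat.factorial s : ℝ) * (‖C‖ ^ (s - 1) * ‖r‖) := by ring

lemma trace_adjugate_mul (A B : Matrix (Fin s) (Fin s) ℝ) :
    (Matrix.adjugate A * B).trace = ∑ i, (A.updateRow i (B i)).det := by
  classical
  have h : ∀ i, (A.updateRow i (B i)).det = ∑ k, Matrix.adjugate A k i * B i k := by
    intro i
    rw [← Matrix.cramer_transpose_apply, Matrix.cramer_eq_adjugate_mulVec]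
    simp [Matrix.mulVec, ← Matrix.adjugate_transpose, dotProduct, Matrix.transpose_apply,
      mul_comm]
  simp only [h, Matrix.trace, Matrix.diag, Matrix.mul_apply]
  exact Finset.sum_comm

lemma abs_trace_adjugate_mul_le (C D : Matrix (Fin s) (Fin s) ℝ) :
    |(Matrix.adjugate C * D).trace|
      ≤ (s : ℝ) * (Nat.factorial s : ℝ) * (‖C‖ ^ (s - 1) * ‖D‖) := by
  classical
  rw [trace_adjugate_mul]
  calc |∑ i, (C.updateRow i (D i)).det| ≤ ∑ i, |(C.updateRow i (D i)).det| :=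
        Finset.abs_sum_le_sum_abs _ _
    _ ≤ ∑ _i : Fin s, (Nat.factorial s : ℝ) * (‖C‖ ^ (s - 1) * ‖D‖) :=
        Finset.sum_le_sum fun i _ => by
          refine (det_updateRow_le C i (D i)).trans ?_
          have h1 : ‖D i‖ ≤ ‖D‖ := norm_le_pi_norm D i
          have : ‖C‖ ^ (s - 1) * ‖D i‖ ≤ ‖C‖ ^ (s - 1) * ‖D‖ :=
            mul_le_mul_of_nonneg_left h1 (by positivity)
          exact mul_le_mul_of_nonneg_left this (by positivity)
    _ = (s : ℝ) * (Nat.factorial s : ℝ) * (‖C‖ ^ (s - 1) * ‖D‖) := by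
        rw [Finset.sum_const, Finset.card_univ, Fintype.card_fin, nsmul_eq_mul]; ring

/-- determinant as a continuous multilinear map in the rows -/
noncomputable def detCM (s : ℕ) : ContinuousMultilinearMap ℝ (fun _ : Fin s => (Fin s → ℝ)) ℝ :=
  MultilinearMap.mkContinuous
    (Matrix.detRowAlternating (R := ℝ) (n := Fin s)).toMultilinearMap
    (Nat.factorial s) (fun m => by
      have h1 : (Matrix.detRowAlternating (R := ℝ) (n := Fin s)).toMultilinearMap m
          = (Matrix.of m).det := rfl
      rw [h1, Real.norm_eq_abs]
      have h := abs_det_le_prod (Matrix.of m) (fun i => ‖m i‖) (fun i => norm_nonneg _)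
        (fun i j => by simpa [Real.norm_eq_abs] using norm_le_pi_norm (m i) j)
      simpa using h)

lemma hasDerivAt_det (A B : Matrix (Fin s) (Fin s) ℝ) (t₀ : ℝ) :
    HasDerivAt (fun t : ℝ => (A + t • B).det)
      ((Matrix.adjugate (A + t₀ • B) * B).trace) t₀ := by
  classical
  have hc : HasDerivAt (fun t : ℝ => (A + t • B : Matrix (Fin s) (Fin s) ℝ)) B t₀ := by
    have h0 := ((hasDerivAt_id' t₀).smul_const B).const_add A
    simp only [one_smul] at h0
    exact h0
  have h := (ContinuousMultilinearMap.hasFDerivAt (detCM s) (A + t₀ • B)).comp_hasDerivAt t₀ hc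
  have hval : ((detCM s).linearDeriv (A + t₀ • B)) B
      = (Matrix.adjugate (A + t₀ • B) * B).trace := by
    erw [ContinuousMultilinearMap.linearDeriv_apply, trace_adjugate_mul]
    exact Finset.sum_congr rfl fun i _ => rfl
  rw [← hval]
  exact h

lemma memLp_norm_pow {X : Type*} [MeasurableSpace X] {μ : Measure X}
    {E : Type*} [NormedAddCommGroup E] {f : X → E} {p : ℝ≥0∞} {s : ℕ} (hs : s ≠ 0)
    (hf : MemLp f p μ) : MemLp (fun x => ‖f x‖ ^ s) (p / s) μ := by
  have hs' : (0 : ℝ) < (s : ℝ) := by exact_mod_cast Nat.pos_of_ne_zero hs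
  refine ⟨(continuous_pow s).comp_aestronglyMeasurable hf.1.norm, ?_⟩
  have heq : (fun x => ‖f x‖ ^ s) = fun x => ‖f x‖ ^ (s : ℝ) := by
    funext x; rw [Real.rpow_natCast]
  rw [heq, eLpNorm_norm_rpow f hs']
  have hps : p / s * ENNReal.ofReal (s : ℝ) = p := by
    rw [ENNReal.ofReal_natCast,
      ENNReal.div_mul_cancel (by exact_mod_cast hs) (ENNReal.natCast_ne_top s)]
  rw [hps]
  exact ENNReal.rpow_lt_top_of_nonneg hs'.le hf.2.ne

lemma integrable_mul_holder {X : Type*} [MeasurableSpace X] {μ : Measure X}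
    {v w : X → ℝ} {q r : ℝ≥0∞} (hv : MemLp v q μ) (hw : MemLp w r μ)
    (h : r⁻¹ + q⁻¹ = 1) : Integrable (fun x => v x * w x) μ := by
  have h1 : (1 : ℝ≥0∞) / 1 = 1 / q + 1 / r := by
    rw [one_div, one_div, one_div, inv_one, ← h, add_comm]
  have h2 : MemLp (v • w) 1 μ := hw.smul hv (hpqr := ⟨by simpa [one_div, eq_comm] using h1⟩)
  exact (memLp_one_iff_integrable.mp h2).congr
    (Filter.Eventually.of_forall fun x => by simp [smul_eq_mul])

end MinorPerturbAux

open MinorPerturbAux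

set_option maxHeartbeats 1000000

/-- Let `Ω ⊂ ℝᵈ` be open with Lebesgue measure, `N, n ≥ 1`,
`1 ≤ s ≤ min N n`, `p ∈ [s, ∞)`, and let `q` be the conjugate exponent of `p/s`
(`q = ∞` when `p = s`).  Let `v ∈ L^q(Ω)`, `M, H ∈ L^p(Ω, ℝ^{N×n})` and let
`α : Fin s → Fin N`, `β : Fin s → Fin n` be injective.  Then
`φ(t) = ∫_Ω v(x) · det((M(x) + t H(x))_{αβ}) dx` is well defined for all `t : ℝ` and is
differentiable at `t = 0` with
`φ'(0) = ∫_Ω v(x) · trace(adjugate((M(x))_{αβ}) · (H(x))_{αβ}) dx`. -/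
theorem hasDerivAt_integral_minor_perturbation
    {d N n s : ℕ} (hN : 1 ≤ N) (hn : 1 ≤ n) (hs : 1 ≤ s) (hs' : s ≤ min N n)
    (Ω : Set (EuclideanSpace ℝ (Fin d))) (hΩ : IsOpen Ω)
    (p q : ℝ≥0∞) (hp : (s : ℝ≥0∞) ≤ p) (hp' : p ≠ ⊤)
    (hq : (p / s)⁻¹ + q⁻¹ = 1)
    (v : EuclideanSpace ℝ (Fin d) → ℝ) (hv : MemLp v q (volume.restrict Ω))
    (M H : EuclideanSpace ℝ (Fin d) → Matrix (Fin N) (Fin n) ℝ)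
    (hM : MemLp M p (volume.restrict Ω)) (hH : MemLp H p (volume.restrict Ω))
    (α : Fin s → Fin N) (hα : Function.Injective α)
    (β : Fin s → Fin n) (hβ : Function.Injective β) :
    (∀ t : ℝ, Integrable
      (fun x => v x * ((M x + t • H x).submatrix α β).det) (volume.restrict Ω)) ∧
    HasDerivAt
      (fun t : ℝ => ∫ x, v x * ((M x + t • H x).submatrix α β).det ∂(volume.restrict Ω))
      (∫ x, v x *
        (Matrix.adjugate ((M x).submatrix α β) * (H x).submatrix α β).trace
        ∂(volume.restrict Ω))
      0 := by
  classical
  have hs0 : s ≠ 0 := by omega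
  set μ := volume.restrict Ω with hμ
  -- measurability of the submatrices
  have hMm : AEStronglyMeasurable (fun x => (M x).submatrix α β) μ :=
    (continuous_id.matrix_submatrix α β).comp_aestronglyMeasurable hM.1
  have hHm : AEStronglyMeasurable (fun x => (H x).submatrix α β) μ :=
    (continuous_id.matrix_submatrix α β).comp_aestronglyMeasurable hH.1
  have hsubnorm : ∀ (P : Matrix (Fin N) (Fin n) ℝ), ‖P.submatrix α β‖ ≤ ‖P‖ := by
    intro P
    rw [Matrix.norm_le_iff (norm_nonneg P)]
    intro i j
    exact Matrix.norm_entry_le_entrywise_sup_norm P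
  have hMA : MemLp (fun x => (M x).submatrix α β) p μ :=
    hM.of_le hMm (Filter.Eventually.of_forall fun x => by
      simpa using hsubnorm (M x))
  have hHB : MemLp (fun x => (H x).submatrix α β) p μ :=
    hH.of_le hHm (Filter.Eventually.of_forall fun x => by
      simpa using hsubnorm (H x))
  -- measurability of the determinant integrand
  have hdm : ∀ t : ℝ, AEStronglyMeasurable
      (fun x => ((M x).submatrix α β + t • (H x).submatrix α β).det) μ := by
    intro t
    exact ((continuous_fst.add (continuous_snd.const_smul t)).matrix_det
      ).comp_aestronglyMeasurable (hMm.prodMk hHm)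
  -- integrability for each t
  have key_int : ∀ t : ℝ, Integrable
      (fun x => v x * ((M x).submatrix α β + t • (H x).submatrix α β).det) μ := by
    intro t
    have hgt : MemLp (fun x => (M x).submatrix α β + t • (H x).submatrix α β) p μ :=
      (hMA.sub (hHB.const_smul (-t))).ae_eq (Filter.Eventually.of_forall fun x => by
        simp [sub_eq_add_neg])
    have hW : MemLp (fun x => (Nat.factorial s : ℝ) *
        ‖(M x).submatrix α β + t • (H x).submatrix α β‖ ^ s) (p / s) μ :=
      (memLp_norm_pow hs0 hgt).const_mul _
    have hD : MemLp (fun x => ((M x).submatrix α β + t • (H x).submatrix α β).det)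
        (p / s) μ := by
      refine hW.of_le (hdm t) (Filter.Eventually.of_forall fun x => ?_)
      rw [Real.norm_eq_abs]
      refine (abs_det_le _).trans (le_abs_self _)
    exact integrable_mul_holder hv hD hq
  have heq : ∀ t : ℝ, (fun x => v x * ((M x + t • H x).submatrix α β).det)
      = fun x => v x * ((M x).submatrix α β + t • (H x).submatrix α β).det := by
    intro t; funext x
    rw [Matrix.submatrix_add, Matrix.submatrix_smul]
    rfl
  constructor
  · intro t; rw [heq t]; exact key_int t
  set F : ℝ → EuclideanSpace ℝ (Fin d) → ℝ :=
    fun t x => v x * ((M x).submatrix α β + t • (H x).submatrix α β).det with hF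
  set F' : ℝ → EuclideanSpace ℝ (Fin d) → ℝ :=
    fun t x => v x * (Matrix.adjugate
      ((M x).submatrix α β + t • (H x).submatrix α β) * (H x).submatrix α β).trace with hF'
  set bound : EuclideanSpace ℝ (Fin d) → ℝ :=
    fun x => ((s : ℝ) * (Nat.factorial s : ℝ)) *
      (‖v x‖ * ‖‖(M x).submatrix α β‖ + ‖(H x).submatrix α β‖‖ ^ s) with hbdef
  have hbound_int : Integrable bound μ := by
    have hf : MemLp (fun x => ‖(M x).submatrix α β‖ + ‖(H x).submatrix α β‖) p μ :=
      hMA.norm.add hHB.norm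
    have hW : MemLp (fun x => ‖‖(M x).submatrix α β‖ + ‖(H x).submatrix α β‖‖ ^ s)
        (p / s) μ := memLp_norm_pow hs0 hf
    exact (integrable_mul_holder hv.norm hW hq).const_mul _
  have hFmeas : ∀ᶠ t in nhds (0:ℝ), AEStronglyMeasurable (F t) μ :=
    Filter.Eventually.of_forall fun t => hv.1.mul (hdm t)
  have hFint : Integrable (F 0) μ := key_int 0
  have hF'meas : AEStronglyMeasurable (F' 0) μ := by
    refine hv.1.mul ?_
    have h1 : AEStronglyMeasurable
        (fun x => Matrix.adjugate
          ((M x).submatrix α β + (0:ℝ) • (H x).submatrix α β)) μ :=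
      (continuous_id.matrix_adjugate).comp_aestronglyMeasurable
        (hMm.add (hHm.const_smul (0:ℝ)))
    have h2 := h1.mul hHm
    exact (continuous_id.matrix_trace).comp_aestronglyMeasurable h2
  have hbd : ∀ᵐ x ∂μ, ∀ t ∈ Metric.ball (0:ℝ) 1, ‖F' t x‖ ≤ bound x := by
    refine Filter.Eventually.of_forall fun x t ht => ?_
    have ht1 : |t| ≤ 1 := by
      rw [Metric.mem_ball, Real.dist_eq, sub_zero] at ht
      exact ht.le
    set Ax := (M x).submatrix α β with hAx
    set Bx := (H x).submatrix α β with hBx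
    have hC : ‖Ax + t • Bx‖ ≤ ‖Ax‖ + ‖Bx‖ := by
      refine (norm_add_le _ _).trans ?_
      have : ‖t • Bx‖ ≤ ‖Bx‖ := by
        rw [norm_smul, Real.norm_eq_abs]
        exact mul_le_of_le_one_left (norm_nonneg _) ht1
      linarith
    have habs : |(Matrix.adjugate (Ax + t • Bx) * Bx).trace|
        ≤ (s : ℝ) * (Nat.factorial s : ℝ) * ((‖Ax‖ + ‖Bx‖) ^ (s - 1) * ‖Bx‖) := by
      refine (abs_trace_adjugate_mul_le _ _).trans ?_
      refine mul_le_mul_of_nonneg_left ?_ (by positivity)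
      exact mul_le_mul_of_nonneg_right
        (pow_le_pow_left₀ (norm_nonneg _) hC _) (norm_nonneg _)
    have hpow : (‖Ax‖ + ‖Bx‖) ^ (s - 1) * ‖Bx‖ ≤ (‖Ax‖ + ‖Bx‖) ^ s := by
      have h1 : ‖Bx‖ ≤ ‖Ax‖ + ‖Bx‖ := by
        have := norm_nonneg Ax; linarith
      calc (‖Ax‖ + ‖Bx‖) ^ (s - 1) * ‖Bx‖ ≤ (‖Ax‖ + ‖Bx‖) ^ (s - 1) * (‖Ax‖ + ‖Bx‖) :=
            mul_le_mul_of_nonneg_left h1 (by positivity)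
        _ = (‖Ax‖ + ‖Bx‖) ^ (s - 1 + 1) := (pow_succ _ _).symm
        _ = (‖Ax‖ + ‖Bx‖) ^ s := by congr 1; omega
    have hnn : ‖Ax‖ + ‖Bx‖ ≤ ‖‖Ax‖ + ‖Bx‖‖ := le_abs_self _
    show ‖v x * (Matrix.adjugate (Ax + t • Bx) * Bx).trace‖ ≤ _
    rw [norm_mul, Real.norm_eq_abs ((Matrix.adjugate (Ax + t • Bx) * Bx).trace)]
    calc ‖v x‖ * |(Matrix.adjugate (Ax + t • Bx) * Bx).trace|
        ≤ ‖v x‖ * ((s : ℝ) * (Nat.factorial s : ℝ) * ((‖Ax‖ + ‖Bx‖) ^ (s - 1) * ‖Bx‖)) :=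
          mul_le_mul_of_nonneg_left habs (norm_nonneg _)
      _ ≤ ‖v x‖ * ((s : ℝ) * (Nat.factorial s : ℝ) * (‖Ax‖ + ‖Bx‖) ^ s) := by
          refine mul_le_mul_of_nonneg_left ?_ (norm_nonneg _)
          exact mul_le_mul_of_nonneg_left hpow (by positivity)
      _ ≤ ‖v x‖ * ((s : ℝ) * (Nat.factorial s : ℝ) * ‖‖Ax‖ + ‖Bx‖‖ ^ s) := by
          refine mul_le_mul_of_nonneg_left ?_ (norm_nonneg _)
          refine mul_le_mul_of_nonneg_left ?_ (by positivity)
          exact pow_le_pow_left₀ (by positivity) hnn _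
      _ = ((s : ℝ) * (Nat.factorial s : ℝ)) * (‖v x‖ * ‖‖Ax‖ + ‖Bx‖‖ ^ s) := by ring
  have hdiff : ∀ᵐ x ∂μ, ∀ t ∈ Metric.ball (0:ℝ) 1, HasDerivAt (F · x) (F' t x) t := by
    refine Filter.Eventually.of_forall fun x t _ => ?_
    exact (hasDerivAt_det ((M x).submatrix α β) ((H x).submatrix α β) t).const_mul (v x)
  have main := hasDerivAt_integral_of_dominated_loc_of_deriv_le
    (Metric.ball_mem_nhds (0:ℝ) one_pos) hFmeas hFint hF'meas hbd hbound_int hdiff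
  have h2 := main.2
  have hfun : (fun t : ℝ => ∫ x, v x * ((M x + t • H x).submatrix α β).det ∂μ)
      = fun t : ℝ => ∫ x, F t x ∂μ := by
    funext t; rw [heq t]
  have hval : (∫ x, F' 0 x ∂μ)
      = ∫ x, v x * (Matrix.adjugate ((M x).submatrix α β) * (H x).submatrix α β).trace ∂μ := by
    rw [hF']
    simp
  rw [hfun, ← hval]
  exact h2
end

section
/- Let U and V be real normed spaces, let K : U → V, R : U → ℝ and w : U → ℝ all be Gâteaux differentiable at a point u† ∈ U, with Gâteaux derivatives K'(u†) ∈ L(U, V), R'(u†) ∈ U* and w'(u†) ∈ U*, and set v† = K(u†). Let β₁ ∈ [0, 1), β₂ > 0, q ≥ 1, ᾱ > 0 and ρ > ᾱ R(u†) be given. Suppose that the variational inequality w(u†) − w(u) ≤ β₁ ( R(u) − R(u†) − w(u) + w(u†) ) + β₂ ‖K(u) − v†‖ holds for every u ∈ U satisfying ‖K(u) − v†‖^q + ᾱ R(u) ≤ ρ. Then for every direction û ∈ U one has 0 ≤ β₁ ⟨R'(u†), û⟩ + (1 − β₁) ⟨w'(u†), û⟩ + β₂ ‖K'(u†) û‖.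 -/
open Filter Topology

/-- Let `K : U → V`, `R, w : U → ℝ` be Gâteaux differentiable at `u† ∈ U`
with derivatives `K'(u†)`, `R'(u†)`, `w'(u†)`, and set `v† = K(u†)`.  Let `β₁ ∈ [0,1)`,
`β₂ > 0`, `q ≥ 1`, `ᾱ > 0`, `ρ > ᾱ R(u†)`.  If the variational inequality
`w(u†) − w(u) ≤ β₁ (R(u) − R(u†) − w(u) + w(u†)) + β₂ ‖K(u) − v†‖` holds for every `u`
with `‖K(u) − v†‖^q + ᾱ R(u) ≤ ρ`, then for every direction `û ∈ U`,
`0 ≤ β₁ ⟨R'(u†), û⟩ + (1 − β₁) ⟨w'(u†), û⟩ + β₂ ‖K'(u†) û‖`. -/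
theorem variational_inequality_implies_differentiated_inequality
    {U V : Type*} [NormedAddCommGroup U] [NormedSpace ℝ U]
    [NormedAddCommGroup V] [NormedSpace ℝ V]
    (K : U → V) (R w : U → ℝ) (udag : U)
    (K' : U →L[ℝ] V) (R' w' : U →L[ℝ] ℝ)
    (hK : ∀ h : U, Tendsto (fun t : ℝ => (1 / t) • (K (udag + t • h) - K udag))
      (𝓝[>] 0) (𝓝 (K' h)))
    (hR : ∀ h : U, Tendsto (fun t : ℝ => (R (udag + t • h) - R udag) / t)
      (𝓝[>] 0) (𝓝 (R' h)))
    (hw : ∀ h : U, Tendsto (fun t : ℝ => (w (udag + t • h) - w udag) / t)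
      (𝓝[>] 0) (𝓝 (w' h)))
    (β₁ β₂ q αbar ρ : ℝ)
    (hβ₁ : 0 ≤ β₁) (hβ₁' : β₁ < 1) (hβ₂ : 0 < β₂) (hq : 1 ≤ q) (hα : 0 < αbar)
    (hρ : αbar * R udag < ρ)
    (hsource : ∀ u : U, ‖K u - K udag‖ ^ q + αbar * R u ≤ ρ →
      w udag - w u ≤ β₁ * (R u - R udag - w u + w udag) + β₂ * ‖K u - K udag‖) :
    ∀ uhat : U, 0 ≤ β₁ * R' uhat + (1 - β₁) * w' uhat + β₂ * ‖K' uhat‖ := by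
  intro uhat
  -- t → 0 along 𝓝[>] 0
  have ht0 : Tendsto (fun t : ℝ => t) (𝓝[>] (0:ℝ)) (𝓝 0) :=
    tendsto_id.mono_left nhdsWithin_le_nhds
  -- Δ(t) = K(u† + t û) - K u† tends to 0
  have hΔ : Tendsto (fun t : ℝ => K (udag + t • uhat) - K udag) (𝓝[>] (0:ℝ)) (𝓝 0) := by
    have h1 : Tendsto (fun t : ℝ => t • ((1 / t) • (K (udag + t • uhat) - K udag)))
        (𝓝[>] (0:ℝ)) (𝓝 ((0:ℝ) • K' uhat)) := ht0.smul (hK uhat)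
    rw [zero_smul] at h1
    refine h1.congr' ?_
    filter_upwards [self_mem_nhdsWithin] with t (ht : 0 < t)
    rw [smul_smul, mul_one_div, div_self ht.ne', one_smul]
  -- R(u† + t û) tends to R u†
  have hRc : Tendsto (fun t : ℝ => R (udag + t • uhat)) (𝓝[>] (0:ℝ)) (𝓝 (R udag)) := by
    have h1 : Tendsto (fun t : ℝ => ((R (udag + t • uhat) - R udag) / t) * t + R udag)
        (𝓝[>] (0:ℝ)) (𝓝 (R' uhat * 0 + R udag)) := (((hR uhat).mul ht0).add tendsto_const_nhds)
    rw [mul_zero, zero_add] at h1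
    refine h1.congr' ?_
    filter_upwards [self_mem_nhdsWithin] with t (ht : 0 < t)
    field_simp
    ring
  -- eventually the constraint holds
  have hcon : ∀ᶠ t in 𝓝[>] (0:ℝ),
      ‖K (udag + t • uhat) - K udag‖ ^ q + αbar * R (udag + t • uhat) ≤ ρ := by
    have hnorm : Tendsto (fun t : ℝ => ‖K (udag + t • uhat) - K udag‖) (𝓝[>] (0:ℝ)) (𝓝 0) := by
      simpa using hΔ.norm
    have hpow : Tendsto (fun t : ℝ => ‖K (udag + t • uhat) - K udag‖ ^ q)
        (𝓝[>] (0:ℝ)) (𝓝 ((0:ℝ) ^ q)) :=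
      hnorm.rpow_const (Or.inr (by linarith))
    rw [Real.zero_rpow (by linarith : q ≠ 0)] at hpow
    have hsum : Tendsto (fun t : ℝ => ‖K (udag + t • uhat) - K udag‖ ^ q
        + αbar * R (udag + t • uhat)) (𝓝[>] (0:ℝ)) (𝓝 (0 + αbar * R udag)) :=
      hpow.add (hRc.const_mul αbar)
    rw [zero_add] at hsum
    filter_upwards [hsum.eventually_lt_const hρ] with t ht using ht.le
  -- the difference quotient expression
  have hmain : Tendsto (fun t : ℝ =>
      β₁ * ((R (udag + t • uhat) - R udag) / t)
      + (1 - β₁) * ((w (udag + t • uhat) - w udag) / t)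
      + β₂ * ‖(1 / t) • (K (udag + t • uhat) - K udag)‖)
      (𝓝[>] (0:ℝ))
      (𝓝 (β₁ * R' uhat + (1 - β₁) * w' uhat + β₂ * ‖K' uhat‖)) :=
    (((hR uhat).const_mul β₁).add ((hw uhat).const_mul (1 - β₁))).add
      ((hK uhat).norm.const_mul β₂)
  refine ge_of_tendsto hmain ?_
  filter_upwards [self_mem_nhdsWithin, hcon] with t (ht : 0 < t) hcon
  have h := hsource _ hcon
  have hnorm : ‖(1 / t) • (K (udag + t • uhat) - K udag)‖
      = ‖K (udag + t • uhat) - K udag‖ / t := by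
    rw [norm_smul, Real.norm_eq_abs, abs_of_pos (by positivity : (0:ℝ) < 1 / t)]
    rw [one_div, inv_mul_eq_div]
  rw [hnorm]
  have key : 0 ≤ β₁ * (R (udag + t • uhat) - R udag)
      + (1 - β₁) * (w (udag + t • uhat) - w udag)
      + β₂ * ‖K (udag + t • uhat) - K udag‖ := by nlinarith [h]
  have := div_nonneg key ht.le
  calc (0:ℝ) ≤ (β₁ * (R (udag + t • uhat) - R udag)
      + (1 - β₁) * (w (udag + t • uhat) - w udag)
      + β₂ * ‖K (udag + t • uhat) - K udag‖) / t := this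
    _ = β₁ * ((R (udag + t • uhat) - R udag) / t)
      + (1 - β₁) * ((w (udag + t • uhat) - w udag) / t)
      + β₂ * (‖K (udag + t • uhat) - K udag‖ / t) := by ring
end

section
/- Let U and V be real normed spaces, let K : U → V be Gâteaux differentiable at u† ∈ U with derivative K'(u†) ∈ L(U, V), and set v† = K(u†). Let R : U → ℝ and let w : U → ℝ be Gâteaux differentiable at u† with derivative w'(u†) ∈ U*, and define D(u) = R(u) − R(u†) − w(u) + w(u†). Let β₁ ∈ [0, 1), ᾱ > 0, q ≥ 1, ρ > ᾱ R(u†), and suppose there exists ω* ∈ V* such that (i) w'(u†) = ω* ∘ K'(u†), and (ii) for every u ∈ U with ‖K(u) − v†‖^q + ᾱ R(u) ≤ ρ one has ‖ω*‖ · ‖K(u) − v† − K'(u†)(u − u†)‖ + w(u†) − w(u) − ⟨w'(u†), u† − u⟩ ≤ β₁ D(u). Then for every u ∈ U with ‖K(u) − v†‖^q + ᾱ R(u) ≤ ρ it holds that w(u†) − w(u) ≤ β₁ D(u) + ‖ω*‖ · ‖K(u) − v†‖. -/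
open Filter Topology

/-- Let `K : U → V` be Gâteaux differentiable at `u†` with derivative
`K'(u†)`, set `v† = K(u†)`, let `R : U → ℝ`, let `w : U → ℝ` be Gâteaux differentiable at
`u†` with derivative `w'(u†) ∈ U*`, and set `D(u) = R(u) − R(u†) − w(u) + w(u†)`.  Let
`β₁ ∈ [0,1)`, `ᾱ > 0`, `q ≥ 1`, `ρ > ᾱ R(u†)`, and suppose there is `ω* ∈ V*` with
(i) `w'(u†) = ω* ∘ K'(u†)` and (ii) for every `u` with `‖K(u) − v†‖^q + ᾱ R(u) ≤ ρ`,
`‖ω*‖ ‖K(u) − v† − K'(u†)(u − u†)‖ + w(u†) − w(u) − ⟨w'(u†), u† − u⟩ ≤ β₁ D(u)`.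
Then for every such `u`, `w(u†) − w(u) ≤ β₁ D(u) + ‖ω*‖ ‖K(u) − v†‖`. -/
theorem range_condition_implies_variational_inequality
    {U V : Type*} [NormedAddCommGroup U] [NormedSpace ℝ U]
    [NormedAddCommGroup V] [NormedSpace ℝ V]
    (K : U → V) (R w : U → ℝ) (udag : U)
    (K' : U →L[ℝ] V) (w' : U →L[ℝ] ℝ)
    (hK : ∀ h : U, Tendsto (fun t : ℝ => (1 / t) • (K (udag + t • h) - K udag))
      (𝓝[>] 0) (𝓝 (K' h)))
    (hw : ∀ h : U, Tendsto (fun t : ℝ => (w (udag + t • h) - w udag) / t)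
      (𝓝[>] 0) (𝓝 (w' h)))
    (β₁ q αbar ρ : ℝ)
    (hβ₁ : 0 ≤ β₁) (hβ₁' : β₁ < 1) (hq : 1 ≤ q) (hα : 0 < αbar)
    (hρ : αbar * R udag < ρ)
    (ωstar : V →L[ℝ] ℝ)
    (hrange : w' = ωstar.comp K')
    (hnonlin : ∀ u : U, ‖K u - K udag‖ ^ q + αbar * R u ≤ ρ →
      ‖ωstar‖ * ‖K u - K udag - K' (u - udag)‖ + w udag - w u - w' (udag - u) ≤
        β₁ * (R u - R udag - w u + w udag)) :
    ∀ u : U, ‖K u - K udag‖ ^ q + αbar * R u ≤ ρ →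
      w udag - w u ≤ β₁ * (R u - R udag - w u + w udag) + ‖ωstar‖ * ‖K u - K udag‖ := by
  intro u hu
  have h2 := hnonlin u hu
  have hkey : w' (udag - u) = ωstar (K u - K udag - K' (u - udag)) - ωstar (K u - K udag) := by
    rw [hrange]
    simp only [ContinuousLinearMap.comp_apply]
    have : K' (udag - u) = -(K' (u - udag)) := by
      rw [show udag - u = -(u - udag) by abel, map_neg]
    rw [this]
    rw [show K u - K udag - K' (u - udag) = (K u - K udag) + -(K' (u - udag)) by abel]
    rw [map_add]
    ring
  have hb1 : ωstar (K u - K udag - K' (u - udag)) ≤ ‖ωstar‖ * ‖K u - K udag - K' (u - udag)‖ :=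
    le_trans (le_abs_self _) (ωstar.le_opNorm _)
  have hb2 : -(ωstar (K u - K udag)) ≤ ‖ωstar‖ * ‖K u - K udag‖ :=
    le_trans (neg_le_abs _) (ωstar.le_opNorm _)
  linarith
end
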